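/- arXiv:1310.6079 — 2 statements merged into one kernel-verified Lean document; each statement's English description precedes it below -/
import Mathlib

section
/- Let 1/2 < s < t < 1, α ∈ ℂ, β ∈ ℝ², N > 0, and let f(x) = α e^{2πi N β·x}. Then for every a ∈ [1,∞), θ ∈ [0,2π), b ∈ ℝ², the integral defining the general curvelet transform W_f(a,θ,b) = ∫_{ℝ²} conj(w_{aθb}(x)) f(x) dx converges absolutely and W_f(a,θ,b) = a^{-(s+t)/2} α e^{2πi N β·b} conj(ŵ(A_a^{-1} R_θ^{-1}(a e_θ − N β))). -/
noncomputable section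
open MeasureTheory Real Complex
open scoped Real

abbrev R2 := EuclideanSpace ℝ (Fin 2)

/-- The vector `(x, y)` in `ℝ²`. -/
def V2 (x y : ℝ) : R2 := (WithLp.equiv 2 (Fin 2 → ℝ)).symm ![x, y]

/-- The unit vector `e_θ = (cos θ, sin θ)`. -/
def eTheta (θ : ℝ) : R2 := V2 (Real.cos θ) (Real.sin θ)

/-- Counterclockwise rotation of `ℝ²` by the angle `θ` (so `rot (-θ)` is `R_θ⁻¹`). -/
def rot (θ : ℝ) (x : R2) : R2 :=
  V2 (Real.cos θ * x 0 - Real.sin θ * x 1) (Real.sin θ * x 0 + Real.cos θ * x 1)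

/-- The scaling map `A_a = diag (a^t, a^s)`. -/
def Aa (t s a : ℝ) (x : R2) : R2 := V2 (a ^ t * x 0) (a ^ s * x 1)

/-- The inverse scaling map `A_a⁻¹ = diag (a^{-t}, a^{-s})`. -/
def AaInv (t s a : ℝ) (x : R2) : R2 := V2 (a ^ (-t) * x 0) (a ^ (-s) * x 1)

/-- The Fourier transform `ĝ(ξ) = ∫ e^{-2πi x·ξ} g(x) dx` on `ℝ²`. -/
def ft (g : R2 → ℂ) (ξ : R2) : ℂ :=
  ∫ x : R2, Complex.exp (-(2 * ↑π * Complex.I) * ((inner ℝ x ξ : ℝ) : ℂ)) * g x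

/-- The general curvelet `w_{aθb}(x) = a^{(t+s)/2} e^{2πi a(x-b)·e_θ} w(A_a R_θ⁻¹ (x-b))`. -/
def curvelet (w : R2 → ℂ) (t s a θ : ℝ) (b x : R2) : ℂ :=
  ((a ^ ((t + s) / 2) : ℝ) : ℂ) *
    Complex.exp (2 * ↑π * Complex.I * ↑a * ((inner ℝ (x - b) (eTheta θ) : ℝ) : ℂ)) *
    w (Aa t s a (rot (-θ) (x - b)))

/-- The general curvelet transform `W_f(a,θ,b) = ∫ conj (w_{aθb}(x)) f(x) dx`. -/
def Wf (w f : R2 → ℂ) (t s a θ : ℝ) (b : R2) : ℂ :=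
  ∫ x : R2, (starRingEnd ℂ) (curvelet w t s a θ b x) * f x

/-- The mother curvelet: its Fourier transform `ŵ` is real-valued, non-negative, radial, and
supported in the closed unit ball.  (Smoothness of `ŵ` follows since `w` is Schwartz.) -/
def IsMotherCurvelet (w : R2 → ℂ) : Prop :=
  (∀ ξ : R2, (ft w ξ).im = 0) ∧ (∀ ξ : R2, 0 ≤ (ft w ξ).re) ∧
  (∀ ξ η : R2, ‖ξ‖ = ‖η‖ → ft w ξ = ft w η) ∧
  (∀ ξ : R2, 1 < ‖ξ‖ → ft w ξ = 0)

/-- The plane wave `f(x) = α e^{2πi N β·x}`. -/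
def planeWave (α : ℂ) (β : R2) (N : ℝ) (x : R2) : ℂ :=
  α * Complex.exp (2 * ↑π * Complex.I * ↑N * ((inner ℝ β x : ℝ) : ℂ))

/-! Substituting `y = A_a R_θ⁻¹ (x - b)` turns the integrand into a constant times
`conj (e^{-2πi y·(-ξ)} w(y))` with `ξ = A_a⁻¹ R_θ⁻¹ (a e_θ - N β)`, because `A_a⁻¹ R_θ⁻¹` is the
inverse transpose of `A_a R_θ⁻¹`. The Jacobian `a^{-(t+s)}` combines with the normalisation
`a^{(t+s)/2}`, and the remaining integral is `conj ŵ(-ξ) = conj ŵ(ξ)` since `ŵ` is radial. -/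

open scoped RealInnerProductSpace ComplexConjugate

section LinearChangeOfVariables

variable {E F : Type*} [NormedAddCommGroup E] [NormedSpace ℝ E] [MeasurableSpace E] [BorelSpace E]
  [FiniteDimensional ℝ E] (μ : Measure E) [μ.IsAddHaarMeasure]
  [NormedAddCommGroup F] {g : E →ₗ[ℝ] E}

lemma LinearMap.measurableEmbedding_of_det_ne_zero (hg : LinearMap.det g ≠ 0) :
    MeasurableEmbedding g :=
  (g.equivOfDetNeZero hg).toContinuousLinearEquiv.toHomeomorph.measurableEmbedding

lemma integral_comp_linearMap_of_det_ne_zero [NormedSpace ℝ F] (hg : LinearMap.det g ≠ 0)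
    (f : E → F) :
    ∫ x, f (g x) ∂μ = |LinearMap.det g|⁻¹ • ∫ y, f y ∂μ := by
  rw [← (g.measurableEmbedding_of_det_ne_zero hg).integral_map,
    Measure.map_linearMap_addHaar_eq_smul_addHaar μ hg, integral_smul_measure,
    ENNReal.toReal_ofReal (abs_nonneg _), abs_inv]

lemma integrable_comp_linearMap_iff_of_det_ne_zero (hg : LinearMap.det g ≠ 0) {f : E → F} :
    Integrable (fun x ↦ f (g x)) μ ↔ Integrable f μ := by
  rw [← Function.comp_def, ← (g.measurableEmbedding_of_det_ne_zero hg).integrable_map_iff,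
    Measure.map_linearMap_addHaar_eq_smul_addHaar μ hg]
  exact integrable_smul_measure (by simpa using hg) ENNReal.ofReal_ne_top

end LinearChangeOfVariables

lemma MeasureTheory.Integrable.conj {α 𝕜 : Type*} [MeasurableSpace α] {μ : Measure α} [RCLike 𝕜]
    {f : α → 𝕜} (hf : Integrable f μ) : Integrable (fun x ↦ conj (f x)) μ :=
  RCLike.conjCLE.toContinuousLinearMap.integrable_comp hf

lemma integrable_exp_inner_mul {V : Type*} [NormedAddCommGroup V] [InnerProductSpace ℝ V]
    [MeasurableSpace V] [OpensMeasurableSpace V] {μ : Measure V} {f : V → ℂ}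
    (hf : Integrable f μ) (ξ : V) :
    Integrable (fun y ↦ Complex.exp (-(2 * π * I) * (⟪y, ξ⟫ : ℂ)) * f y) μ := by
  refine hf.bdd_mul (c := 1) (Continuous.aestronglyMeasurable (by fun_prop))
    (Filter.Eventually.of_forall fun y ↦ ?_)
  rw [Complex.norm_exp]
  simp

@[simp] lemma V2_apply_zero (x y : ℝ) : V2 x y 0 = x := rfl

@[simp] lemma V2_apply_one (x y : ℝ) : V2 x y 1 = y := rfl

lemma R2_ext {x y : R2} (h0 : x 0 = y 0) (h1 : x 1 = y 1) : x = y := by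
  ext i; fin_cases i <;> assumption

lemma R2_inner_eq (x y : R2) : ⟪x, y⟫ = x 0 * y 0 + x 1 * y 1 := by
  simp only [PiLp.inner_apply, Fin.sum_univ_two, RCLike.inner_apply, conj_trivial]
  ring

lemma inner_rot_rot (θ : ℝ) (x y : R2) : ⟪rot θ x, rot θ y⟫ = ⟪x, y⟫ := by
  simp only [R2_inner_eq, rot, V2_apply_zero, V2_apply_one]
  linear_combination (x 0 * y 0 + x 1 * y 1) * Real.sin_sq_add_cos_sq θ

lemma inner_Aa_AaInv {a : ℝ} (ha : 0 < a) (t s : ℝ) (x y : R2) :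
    ⟪Aa t s a x, AaInv t s a y⟫ = ⟪x, y⟫ := by
  have hat : a ^ t * a ^ (-t) = 1 := by rw [← Real.rpow_add ha]; simp
  have has : a ^ s * a ^ (-s) = 1 := by rw [← Real.rpow_add ha]; simp
  simp only [R2_inner_eq, Aa, AaInv, V2_apply_zero, V2_apply_one]
  linear_combination (x 0 * y 0) * hat + (x 1 * y 1) * has

def scaleRot (t s a θ : ℝ) : R2 →ₗ[ℝ] R2 where
  toFun x := Aa t s a (rot (-θ) x)
  map_add' x y := by apply R2_ext <;> simp [Aa, rot] <;> ring
  map_smul' c x := by apply R2_ext <;> simp [Aa, rot] <;> ring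

@[simp] lemma scaleRot_apply (t s a θ : ℝ) (x : R2) :
    scaleRot t s a θ x = Aa t s a (rot (-θ) x) := rfl

lemma det_scaleRot {a : ℝ} (ha : 0 < a) (t s θ : ℝ) :
    LinearMap.det (scaleRot t s a θ) = a ^ (t + s) := by
  rw [← LinearMap.det_toMatrix (PiLp.basisFun 2 ℝ (Fin 2)), Matrix.det_fin_two]
  simp only [LinearMap.toMatrix_apply, PiLp.basisFun_apply, PiLp.basisFun_repr, scaleRot_apply, Aa,
    rot, Real.cos_neg, Real.sin_neg, PiLp.single_eq_same, PiLp.single_eq_of_ne, ne_eq, one_ne_zero,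
    zero_ne_one, not_false_eq_true, V2_apply_zero, V2_apply_one, mul_one, mul_zero, mul_neg,
    sub_zero, add_zero, zero_add, sub_neg_eq_add]
  rw [Real.rpow_add ha]
  linear_combination (a ^ t * a ^ s) * Real.sin_sq_add_cos_sq θ

lemma inner_scaleRot_AaInv_rot {a : ℝ} (ha : 0 < a) (t s θ : ℝ) (x v : R2) :
    ⟪scaleRot t s a θ x, AaInv t s a (rot (-θ) v)⟫ = ⟪x, v⟫ := by
  rw [scaleRot_apply, inner_Aa_AaInv ha, inner_rot_rot]

lemma conj_curvelet_mul_planeWave {a : ℝ} (ha : 0 < a) (w : R2 → ℂ) (t s θ : ℝ) (α : ℂ) (β : R2)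
    (N : ℝ) (b x : R2) :
    conj (curvelet w t s a θ b x) * planeWave α β N x =
      ((a ^ ((t + s) / 2) : ℝ) : ℂ) * α * Complex.exp (2 * π * I * N * (⟪β, b⟫ : ℂ)) *
        conj (Complex.exp (-(2 * π * I) *
            (⟪scaleRot t s a θ (x - b), -AaInv t s a (rot (-θ) (a • eTheta θ - N • β))⟫ : ℂ)) *
          w (scaleRot t s a θ (x - b))) := by
  have hphase : ⟪scaleRot t s a θ (x - b), -AaInv t s a (rot (-θ) (a • eTheta θ - N • β))⟫ =
      N * ⟪β, x - b⟫ - a * ⟪x - b, eTheta θ⟫ := by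
    rw [inner_neg_right, inner_scaleRot_AaInv_rot ha, inner_sub_right, real_inner_smul_right,
      real_inner_smul_right, real_inner_comm β]
    ring
  have hβ : ⟪β, x⟫ = ⟪β, x - b⟫ + ⟪β, b⟫ := by rw [inner_sub_right]; ring
  have hexp : conj (Complex.exp (2 * π * I * a * (⟪x - b, eTheta θ⟫ : ℂ))) *
        Complex.exp (2 * π * I * N * (⟪β, x⟫ : ℂ)) =
      Complex.exp (2 * π * I * N * (⟪β, b⟫ : ℂ)) *
        conj (Complex.exp (-(2 * π * I) * ((N * ⟪β, x - b⟫ - a * ⟪x - b, eTheta θ⟫ : ℝ) : ℂ))) := by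
    rw [← Complex.exp_conj, ← Complex.exp_conj, ← Complex.exp_add, ← Complex.exp_add, hβ]
    congr 1
    simp only [map_mul, map_neg, map_ofNat, Complex.conj_I, Complex.conj_ofReal]
    push_cast
    ring
  rw [hphase]
  simp only [curvelet, planeWave, scaleRot_apply, map_mul, Complex.conj_ofReal]
  linear_combination
    ((a ^ ((t + s) / 2) : ℝ) : ℂ) * α * conj (w (Aa t s a (rot (-θ) (x - b)))) * hexp

theorem statement1_general (s t : ℝ)
    (w : SchwartzMap R2 ℂ) (hw : IsMotherCurvelet ⇑w)
    (α : ℂ) (β : R2) (N : ℝ)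
    (a : ℝ) (ha : 1 ≤ a) (θ : ℝ) (b : R2) :
    Integrable
      (fun x : R2 => (starRingEnd ℂ) (curvelet (⇑w) t s a θ b x) * planeWave α β N x) ∧
    Wf (⇑w) (planeWave α β N) t s a θ b =
      ((a ^ (-((s + t) / 2)) : ℝ) : ℂ) * α *
        Complex.exp (2 * ↑π * Complex.I * ↑N * ((inner ℝ β b : ℝ) : ℂ)) *
        (starRingEnd ℂ) (ft (⇑w) (AaInv t s a (rot (-θ) (a • eTheta θ - N • β)))) := by
  have ha₀ : 0 < a := one_pos.trans_le ha
  set G := scaleRot t s a θ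
  set ξ := AaInv t s a (rot (-θ) (a • eTheta θ - N • β))
  set C : ℂ := ((a ^ ((t + s) / 2) : ℝ) : ℂ) * α * Complex.exp (2 * π * I * N * (⟪β, b⟫ : ℂ))
  set K : R2 → ℂ := fun y ↦ Complex.exp (-(2 * π * I) * (⟪y, -ξ⟫ : ℂ)) * w y
  have hdet : LinearMap.det G ≠ 0 := by rw [det_scaleRot ha₀]; positivity
  have hintegrand : (fun x ↦ conj (curvelet w t s a θ b x) * planeWave α β N x) =
      fun x ↦ C * conj (K (G (x - b))) :=
    funext (conj_curvelet_mul_planeWave ha₀ w t s θ α β N b)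
  have hK : Integrable (fun y ↦ conj (K (G y))) :=
    (integrable_comp_linearMap_iff_of_det_ne_zero volume hdet).2
      (integrable_exp_inner_mul w.integrable (-ξ)).conj
  refine ⟨hintegrand ▸ (hK.const_mul C).comp_sub_right b, ?_⟩
  have hpow : a ^ ((t + s) / 2) * (a ^ (t + s))⁻¹ = a ^ (-((s + t) / 2)) := by
    rw [← Real.rpow_neg ha₀.le, ← Real.rpow_add ha₀]
    ring_nf
  calc Wf w (planeWave α β N) t s a θ b = C * ∫ y, conj (K (G y)) := by
        rw [Wf, hintegrand, integral_sub_right_eq_self (fun x ↦ C * conj (K (G x))) b,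
          integral_const_mul]
    _ = C * (|a ^ (t + s)|⁻¹ • conj (ft w (-ξ))) := by
        rw [integral_comp_linearMap_of_det_ne_zero volume hdet (fun y ↦ conj (K y)), integral_conj,
          det_scaleRot ha₀]
        rfl
    _ = _ := by
        rw [hw.2.2.1 _ ξ (norm_neg ξ), abs_of_pos (by positivity), Complex.real_smul, ← hpow]
        push_cast
        ring

/-- For the plane wave `f(x) = α e^{2πi N β·x}`, the integral defining a general
curvelet coefficient converges absolutely and
`W_f(a,θ,b) = a^{-(s+t)/2} α e^{2πi N β·b} conj (ŵ(A_a⁻¹ R_θ⁻¹ (a e_θ - N β)))`. -/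
theorem statement1 (s t : ℝ) (hs : 1 / 2 < s) (hst : s < t) (ht : t < 1)
    (w : SchwartzMap R2 ℂ) (hw : IsMotherCurvelet ⇑w)
    (α : ℂ) (β : R2) (N : ℝ) (hN : 0 < N)
    (a : ℝ) (ha : 1 ≤ a) (θ : ℝ) (hθ : θ ∈ Set.Ico 0 (2 * π)) (b : R2) :
    Integrable
      (fun x : R2 => (starRingEnd ℂ) (curvelet (⇑w) t s a θ b x) * planeWave α β N x) ∧
    Wf (⇑w) (planeWave α β N) t s a θ b =
      ((a ^ (-((s + t) / 2)) : ℝ) : ℂ) * α *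
        Complex.exp (2 * ↑π * Complex.I * ↑N * ((inner ℝ β b : ℝ) : ℂ)) *
        (starRingEnd ℂ) (ft (⇑w) (AaInv t s a (rot (-θ) (a • eTheta θ - N • β)))) :=
  statement1_general s t w hw α β N a ha θ b
end
end

section
/- (Anisotropic decay of the elliptical gradient factor near the supported cone.) Let 1/2 < s < t < 1, M ≥ 1, N ≥ 1, let a satisfy N/(2M) ≤ a ≤ 2MN, and let θ̃ ∈ ℝ satisfy |sin θ̃| ≤ (M/N)^{t-s}. Then √(cos²θ̃ · a^{-2t} + sin²θ̃ · a^{-2s}) ≤ ((2M)^t + 2^s M^t) N^{-t}. -/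
noncomputable section
open Real

/-- Anisotropic decay of the elliptical gradient factor near the supported
cone. For `1/2 < s < t < 1`, `M ≥ 1`, `N ≥ 1`, `N/(2M) ≤ a ≤ 2MN` and `|sin θ̃| ≤ (M/N)^{t-s}`,
one has `√(cos²θ̃ · a^{-2t} + sin²θ̃ · a^{-2s}) ≤ ((2M)^t + 2^s M^t) N^{-t}`. -/
theorem statement13 (s t M N a θ' : ℝ)
    (hs : 1 / 2 < s) (hst : s < t) (ht : t < 1) (hM : 1 ≤ M) (hN : 1 ≤ N)
    (halo : N / (2 * M) ≤ a) (hahi : a ≤ 2 * M * N)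
    (hθ : |Real.sin θ'| ≤ (M / N) ^ (t - s)) :
    Real.sqrt (Real.cos θ' ^ 2 * a ^ (-(2 * t)) + Real.sin θ' ^ 2 * a ^ (-(2 * s))) ≤
      ((2 * M) ^ t + 2 ^ s * M ^ t) * N ^ (-t) := by
  have hM0 : (0:ℝ) < M := lt_of_lt_of_le one_pos hM
  have hN0 : (0:ℝ) < N := lt_of_lt_of_le one_pos hN
  have hb0 : (0:ℝ) < N / (2 * M) := by positivity
  have ha0 : (0:ℝ) < a := lt_of_lt_of_le hb0 halo
  set A := a ^ (-t) with hAdef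
  set B := a ^ (-s) with hBdef
  have hA0 : 0 ≤ A := Real.rpow_nonneg ha0.le _
  have hB0 : 0 ≤ B := Real.rpow_nonneg ha0.le _
  have hA2 : a ^ (-(2 * t)) = A ^ 2 := by
    rw [hAdef, ← Real.rpow_natCast (a ^ (-t)) 2, ← Real.rpow_mul ha0.le]
    norm_num; ring_nf
  have hB2 : a ^ (-(2 * s)) = B ^ 2 := by
    rw [hBdef, ← Real.rpow_natCast (a ^ (-s)) 2, ← Real.rpow_mul ha0.le]
    norm_num; ring_nf
  have key : Real.sqrt (Real.cos θ' ^ 2 * a ^ (-(2 * t)) + Real.sin θ' ^ 2 * a ^ (-(2 * s)))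
      ≤ |Real.cos θ'| * A + |Real.sin θ'| * B := by
    rw [hA2, hB2]
    have hRHS : 0 ≤ |Real.cos θ'| * A + |Real.sin θ'| * B := by positivity
    rw [show |Real.cos θ'| * A + |Real.sin θ'| * B =
        Real.sqrt ((|Real.cos θ'| * A + |Real.sin θ'| * B) ^ 2) from
        (Real.sqrt_sq hRHS).symm]
    apply Real.sqrt_le_sqrt
    have h1 : |Real.cos θ'| ^ 2 = Real.cos θ' ^ 2 := sq_abs _
    have h2 : |Real.sin θ'| ^ 2 = Real.sin θ' ^ 2 := sq_abs _
    nlinarith [mul_nonneg (mul_nonneg (abs_nonneg (Real.cos θ')) hA0)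
      (mul_nonneg (abs_nonneg (Real.sin θ')) hB0)]
  -- bound A
  have hAle : A ≤ (N / (2 * M)) ^ (-t) :=
    Real.rpow_le_rpow_of_nonpos hb0 halo (by linarith)
  have hBle : B ≤ (N / (2 * M)) ^ (-s) :=
    Real.rpow_le_rpow_of_nonpos hb0 halo (by linarith)
  have eA : (N / (2 * M)) ^ (-t) = (2 * M) ^ t * N ^ (-t) := by
    rw [Real.rpow_neg hb0.le, ← Real.inv_rpow hb0.le, inv_div,
      Real.div_rpow (by positivity) hN0.le, Real.rpow_neg hN0.le, div_eq_mul_inv]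
  have eB : (N / (2 * M)) ^ (-s) = 2 ^ s * (M / N) ^ s := by
    rw [Real.rpow_neg hb0.le, ← Real.inv_rpow hb0.le, inv_div,
      show (2 * M) / N = 2 * (M / N) by ring,
      Real.mul_rpow (by norm_num) (by positivity)]
  have hsinB : |Real.sin θ'| * B ≤ 2 ^ s * M ^ t * N ^ (-t) := by
    have h1 : |Real.sin θ'| * B ≤ (M / N) ^ (t - s) * (2 ^ s * (M / N) ^ s) := by
      apply mul_le_mul hθ (eB ▸ hBle) hB0 (by positivity)
    refine h1.trans_eq ?_
    rw [show (M / N) ^ (t - s) * (2 ^ s * (M / N) ^ s)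
        = 2 ^ s * ((M / N) ^ (t - s) * (M / N) ^ s) by ring,
      ← Real.rpow_add (by positivity : (0:ℝ) < M / N), sub_add_cancel,
      Real.div_rpow hM0.le hN0.le, Real.rpow_neg hN0.le, div_eq_mul_inv, mul_assoc]
  have hcosA : |Real.cos θ'| * A ≤ (2 * M) ^ t * N ^ (-t) := by
    calc |Real.cos θ'| * A ≤ 1 * A :=
          mul_le_mul_of_nonneg_right (abs_cos_le_one θ') hA0
      _ = A := one_mul A
      _ ≤ (2 * M) ^ t * N ^ (-t) := eA ▸ hAle
  calc Real.sqrt (Real.cos θ' ^ 2 * a ^ (-(2 * t)) + Real.sin θ' ^ 2 * a ^ (-(2 * s)))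
      ≤ |Real.cos θ'| * A + |Real.sin θ'| * B := key
    _ ≤ (2 * M) ^ t * N ^ (-t) + 2 ^ s * M ^ t * N ^ (-t) := add_le_add hcosA hsinB
    _ = ((2 * M) ^ t + 2 ^ s * M ^ t) * N ^ (-t) := by ring
end
end
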